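/- Let m_Q > 0 be as in the context. There exists δ > 0 such that for every real number E₀ with E₀ < m_Q and every real Schwartz function φ on ℝ³ with J(φ) ≤ E₀, exactly one of the following two alternatives holds: either (i) K₀(φ) ≤ −2(m_Q − E₀) and K₂(φ) ≤ −2(m_Q − E₀); or (ii) K₀(φ) ≥ min( 2(m_Q − E₀), δ·∫_{ℝ³}(|φ|² + |∇φ|²) dx ) and K₂(φ) ≥ min( 2(m_Q − E₀), δ·∫_{ℝ³}|∇φ|² dx ). In particular, K₀(φ) and K₂(φ) have the same sign. -/

import Mathlib

open MeasureTheory SchwartzMap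
open scoped FourierTransform RealInnerProductSpace ENNReal

noncomputable section

abbrev E3 : Type := EuclideanSpace ℝ (Fin 3)

/-- Static Klein-Gordon energy. -/
def Jfun (φ : E3 → ℝ) : ℝ :=
  ∫ x : E3, (((φ x) ^ 2 + ‖gradient φ x‖ ^ 2) / 2 - (φ x) ^ 4 / 4)

def K0fun (φ : E3 → ℝ) : ℝ :=
  ∫ x : E3, ((φ x) ^ 2 + ‖gradient φ x‖ ^ 2 - (φ x) ^ 4)

def K2fun (φ : E3 → ℝ) : ℝ :=
  ∫ x : E3, (‖gradient φ x‖ ^ 2 - (3 / 4) * (φ x) ^ 4)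

def G0fun (φ : E3 → ℝ) : ℝ := Jfun φ - K0fun φ / 4

def G2fun (φ : E3 → ℝ) : ℝ := Jfun φ - K2fun φ / 3

/-- Squared homogeneous `Ḣ⁻¹` norm. -/
def Hm1sq (v : E3 → ℝ) : ℝ :=
  ∫ ξ : E3, ‖ξ‖⁻¹ ^ 2 * ‖𝓕 (fun x : E3 => (v x : ℂ)) ξ‖ ^ 2

/-- Energy of the Klein-Gordon-Zakharov system. -/
def Efun (α : ℝ) (u w n v : E3 → ℝ) : ℝ :=
  (∫ x : E3, ((u x) ^ 2 + ‖gradient u x‖ ^ 2 + (w x) ^ 2) / 2)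
    + (1 / 4) * ((α ^ 2)⁻¹ * Hm1sq v + ∫ x : E3, (n x) ^ 2)
    - (1 / 2) * ∫ x : E3, n x * (u x) ^ 2

/-- Squared `L²` norm for ‖φ‖²_{L⁴}: `(∫ φ⁴)^{1/2}`. -/
def L4sq (φ : E3 → ℝ) : ℝ := (∫ x : E3, (φ x) ^ 4) ^ ((1 : ℝ) / 2)

/-- Laplacian. -/
def lap (f : E3 → ℝ) (x : E3) : ℝ :=
  ∑ i : Fin 3, fderiv ℝ (fun y => fderiv ℝ f y (EuclideanSpace.single i 1)) x
    (EuclideanSpace.single i 1)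

/-- Time derivative. -/
def dt (u : ℝ → E3 → ℝ) (t : ℝ) (x : E3) : ℝ := deriv (fun s => u s x) t

/-- Second time derivative. -/
def dtt (u : ℝ → E3 → ℝ) (t : ℝ) (x : E3) : ℝ := deriv (fun s => dt u s x) t

/-- A classical solution of the Klein-Gordon-Zakharov system on a time interval `I`:
smooth in `(t,x)`, Schwartz in `x` with Schwartz seminorms locally bounded in `t`, and
solving `∂ₜ²u - Δu + u = n u`, `α⁻² ∂ₜ²n - Δn = -Δ(u²)` pointwise. -/
structure IsKGZSol (α : ℝ) (I : Set ℝ) (u n : ℝ → E3 → ℝ) : Prop where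
  smooth_u : ContDiffOn ℝ (⊤ : ℕ∞) (fun p : ℝ × E3 => u p.1 p.2) (I ×ˢ Set.univ)
  smooth_n : ContDiffOn ℝ (⊤ : ℕ∞) (fun p : ℝ × E3 => n p.1 p.2) (I ×ˢ Set.univ)
  schwartz_bdd : ∀ K : Set ℝ, K ⊆ I → IsCompact K → ∀ k m : ℕ, ∃ C : ℝ,
    ∀ t ∈ K, ∀ x : E3,
      ‖x‖ ^ k * ‖iteratedFDeriv ℝ m (u t) x‖ ≤ C ∧
      ‖x‖ ^ k * ‖iteratedFDeriv ℝ m (dt u t) x‖ ≤ C ∧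
      ‖x‖ ^ k * ‖iteratedFDeriv ℝ m (n t) x‖ ≤ C ∧
      ‖x‖ ^ k * ‖iteratedFDeriv ℝ m (dt n t) x‖ ≤ C
  eq_u : ∀ t ∈ I, ∀ x : E3, dtt u t x - lap (u t) x + u t x = n t x * u t x
  eq_n : ∀ t ∈ I, ∀ x : E3,
    (α ^ 2)⁻¹ * dtt n t x - lap (n t) x = - lap (fun y => (u t y) ^ 2) x


namespace SDAux

lemma schwartz_bound {V : Type*} [NormedAddCommGroup V] [NormedSpace ℝ V] (ψ : 𝓢(E3, V)) :
    ∃ C : ℝ, 0 ≤ C ∧ ∀ x, ‖ψ x‖ ≤ C := by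
  obtain ⟨C, hC⟩ := ψ.decay 0 0
  exact ⟨C, hC.1.le, fun x => by simpa using hC.2 x⟩

lemma integrable_norm_pow {V : Type*} [NormedAddCommGroup V] [NormedSpace ℝ V]
    (ψ : 𝓢(E3, V)) (n : ℕ) :
    Integrable (fun x => ‖ψ x‖ ^ (n + 1)) (volume : Measure E3) := by
  obtain ⟨C, hC0, hC⟩ := schwartz_bound ψ
  refine (((ψ.integrable (μ := volume)).norm.const_mul (C ^ n)).mono'
    ((ψ.continuous.norm.pow _).aestronglyMeasurable) ?_)
  filter_upwards with x
  have h1 : ‖ψ x‖ ^ (n+1) = ‖ψ x‖ ^ n * ‖ψ x‖ := pow_succ _ _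
  have h2 : ‖ψ x‖ ^ n * ‖ψ x‖ ≤ C ^ n * ‖ψ x‖ := by
    gcongr
    exact hC x
  rw [Real.norm_of_nonneg (by positivity), h1]
  exact h2

lemma norm_gradient_eq (f : E3 → ℝ) (x : E3) : ‖gradient f x‖ = ‖fderiv ℝ f x‖ := by
  rw [gradient]
  exact LinearIsometryEquiv.norm_map _ _

variable (φ : 𝓢(E3, ℝ))

def m2I : ℝ := ∫ x : E3, (φ x) ^ 2
def dI : ℝ := ∫ x : E3, ‖gradient ⇑φ x‖ ^ 2
def pI : ℝ := ∫ x : E3, (φ x) ^ 4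

lemma integrable_sq : Integrable (fun x : E3 => (φ x) ^ 2) := by
  have := integrable_norm_pow φ 1
  simpa [Real.norm_eq_abs, sq_abs] using this

lemma integrable_p4 : Integrable (fun x : E3 => (φ x) ^ 4) := by
  have := integrable_norm_pow φ 3
  have this' : Integrable (fun x : E3 => ‖φ x‖ ^ 4) (volume : Measure E3) := by
    simpa using this
  have key : (fun x : E3 => (φ x) ^ 4) = fun x => ‖φ x‖ ^ 4 := by
    funext x
    rw [Real.norm_eq_abs, pow_abs, abs_of_nonneg (by positivity : (0:ℝ) ≤ (φ x) ^ 4)]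
  rw [key]; exact this'

lemma integrable_gradsq : Integrable (fun x : E3 => ‖gradient ⇑φ x‖ ^ 2) := by
  have := integrable_norm_pow (SchwartzMap.fderivCLM ℝ E3 ℝ φ) 1
  simpa [norm_gradient_eq] using this

end SDAux

namespace SDAux2
open SDAux

variable (φ : 𝓢(E3, ℝ))

lemma sum_eq : ∫ x : E3, ((φ x) ^ 2 + ‖gradient ⇑φ x‖ ^ 2) = m2I φ + dI φ :=
  integral_add (integrable_sq φ) (integrable_gradsq φ)

lemma J_eq : Jfun ⇑φ = (m2I φ + dI φ) / 2 - pI φ / 4 := by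
  have h1 : Jfun ⇑φ = (∫ x : E3, ((φ x) ^ 2 + ‖gradient ⇑φ x‖ ^ 2) / 2)
      - ∫ x : E3, (φ x) ^ 4 / 4 :=
    integral_sub (((integrable_sq φ).add (integrable_gradsq φ)).div_const 2)
      ((integrable_p4 φ).div_const 4)
  have h2 : ∫ x : E3, ((φ x) ^ 2 + ‖gradient ⇑φ x‖ ^ 2) / 2
      = (∫ x : E3, ((φ x) ^ 2 + ‖gradient ⇑φ x‖ ^ 2)) / 2 := integral_div 2 _
  have h4 : ∫ x : E3, (φ x) ^ 4 / 4 = pI φ / 4 := integral_div 4 _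
  rw [h1, h2, sum_eq, h4]

lemma K0_eq : K0fun ⇑φ = m2I φ + dI φ - pI φ := by
  have h1 : K0fun ⇑φ = (∫ x : E3, ((φ x) ^ 2 + ‖gradient ⇑φ x‖ ^ 2))
      - ∫ x : E3, (φ x) ^ 4 :=
    integral_sub ((integrable_sq φ).add (integrable_gradsq φ)) (integrable_p4 φ)
  rw [h1, sum_eq]; rfl

lemma K2_eq : K2fun ⇑φ = dI φ - 3 / 4 * pI φ := by
  have h1 : K2fun ⇑φ = (∫ x : E3, ‖gradient ⇑φ x‖ ^ 2)
      - ∫ x : E3, 3 / 4 * (φ x) ^ 4 :=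
    integral_sub (integrable_gradsq φ) ((integrable_p4 φ).const_mul _)
  have h2 : ∫ x : E3, 3 / 4 * (φ x) ^ 4 = 3 / 4 * pI φ := integral_const_mul _ _
  rw [h1, h2]; rfl

lemma m2I_nonneg : 0 ≤ m2I φ := integral_nonneg fun x => sq_nonneg _
lemma dI_nonneg : 0 ≤ dI φ := integral_nonneg fun x => sq_nonneg _
lemma pI_nonneg : 0 ≤ pI φ := integral_nonneg fun x => by positivity

lemma coe_eq_zero_of_m2I (h : m2I φ = 0) : ⇑φ = 0 := by
  have h0 : (fun x : E3 => (φ x) ^ 2) =ᵐ[volume] 0 :=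
    (integral_eq_zero_iff_of_nonneg (fun x => sq_nonneg _) (integrable_sq φ)).1 h
  have hz := (Continuous.ae_eq_iff_eq volume (φ.continuous.pow 2) continuous_const).1 h0
  funext x
  have hx := congrFun hz x
  simp only [Pi.zero_apply] at hx ⊢
  exact pow_eq_zero_iff (two_ne_zero) |>.1 hx

lemma coe_eq_zero_of_dI (h : dI φ = 0) : ⇑φ = 0 := by
  have h0 : (fun x : E3 => ‖gradient ⇑φ x‖ ^ 2) =ᵐ[volume] 0 :=
    (integral_eq_zero_iff_of_nonneg (fun x => by positivity) (integrable_gradsq φ)).1 h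
  have hcont : Continuous fun x : E3 => ‖gradient ⇑φ x‖ ^ 2 := by
    have h2 : Continuous fun x : E3 => ‖(SchwartzMap.fderivCLM ℝ E3 ℝ φ) x‖ ^ 2 :=
      ((SchwartzMap.fderivCLM ℝ E3 ℝ φ).continuous.norm.pow 2)
    simpa [norm_gradient_eq] using h2
  have hz := (Continuous.ae_eq_iff_eq volume hcont continuous_const).1 h0
  have hfz : ∀ x : E3, fderiv ℝ ⇑φ x = 0 := by
    intro x
    have hx := congrFun hz x
    have hsq : ‖gradient ⇑φ x‖ ^ 2 = 0 := hx
    have h2 : ‖fderiv ℝ ⇑φ x‖ = 0 := by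
      rw [← norm_gradient_eq]
      nlinarith [norm_nonneg (gradient ⇑φ x)]
    simpa using h2
  have hconst : ∀ x : E3, φ x = φ 0 := fun x =>
    is_const_of_fderiv_eq_zero φ.differentiable hfz x 0
  obtain ⟨C, hCpos, hC⟩ := φ.decay 1 0
  have hb : ∀ x : E3, ‖x‖ * ‖φ 0‖ ≤ C := by
    intro x
    have := hC x
    simpa [hconst x] using this
  have h00 : φ 0 = 0 := by
    by_contra hne
    have hpos : 0 < ‖φ 0‖ := norm_pos_iff.2 hne
    have hx := hb (EuclideanSpace.single (0 : Fin 3) ((C + 1) / ‖φ 0‖))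
    rw [EuclideanSpace.norm_single] at hx
    have hmul : (C + 1) / ‖φ 0‖ * ‖φ 0‖ = C + 1 := div_mul_cancel₀ _ hpos.ne'
    have habs : (C + 1) / ‖φ 0‖ ≤ ‖(C + 1) / ‖φ 0‖‖ := le_abs_self _
    nlinarith [mul_nonneg (sub_nonneg.2 habs) hpos.le]
  funext x
  rw [hconst x, h00]
  rfl

end SDAux2

namespace SDAux3
open SDAux SDAux2

lemma integral_comp_smul' (f : E3 → ℝ) (c : ℝ) (hc : 0 < c) :
    ∫ x : E3, f (c • x) = (c ^ 3)⁻¹ * ∫ x : E3, f x := by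
  have h := MeasureTheory.Measure.integral_comp_smul (volume : Measure E3) f c
  have h3 : Module.finrank ℝ E3 = 3 := finrank_euclideanSpace_fin
  rw [h3] at h
  rw [h, smul_eq_mul]
  congr 1
  rw [abs_of_pos (by positivity)]

lemma exists_scaled (φ : 𝓢(E3, ℝ)) (a c : ℝ) (hc : 0 < c) :
    ∃ χ : 𝓢(E3, ℝ),
      m2I χ = a ^ 2 * (c ^ 3)⁻¹ * m2I φ ∧
      dI χ = a ^ 2 * c ^ 2 * (c ^ 3)⁻¹ * dI φ ∧
      pI χ = a ^ 4 * (c ^ 3)⁻¹ * pI φ := by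
  have hg : Function.HasTemperateGrowth (fun x : E3 => c • x) := by
    have := (c • ContinuousLinearMap.id ℝ E3).hasTemperateGrowth
    exact this
  have hup : ∃ (k : ℕ) (C : ℝ), ∀ x : E3, ‖x‖ ≤ C * (1 + ‖c • x‖) ^ k := by
    refine ⟨1, c⁻¹, fun x => ?_⟩
    rw [norm_smul, pow_one, Real.norm_eq_abs, abs_of_pos hc]
    have hci : 0 < c⁻¹ := inv_pos.2 hc
    have h2 : c * ‖x‖ ≤ 1 + c * ‖x‖ := by linarith
    calc ‖x‖ = c⁻¹ * (c * ‖x‖) := by field_simp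
      _ ≤ c⁻¹ * (1 + c * ‖x‖) := mul_le_mul_of_nonneg_left h2 hci.le
  set χ : 𝓢(E3, ℝ) := a • (SchwartzMap.compCLM ℝ hg hup φ) with hχdef
  have hχ : ∀ x : E3, χ x = a * φ (c • x) := by
    intro x
    rw [hχdef]
    simp [SchwartzMap.compCLM_apply]
  have hgrad : ∀ x : E3, ‖gradient ⇑χ x‖ ^ 2
      = (a * c) ^ 2 * ‖gradient ⇑φ (c • x)‖ ^ 2 := by
    intro x
    have hL : HasFDerivAt (fun y : E3 => c • y) (c • ContinuousLinearMap.id ℝ E3) x := by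
      have := (c • ContinuousLinearMap.id ℝ E3).hasFDerivAt (x := x)
      exact this
    have hφd : HasFDerivAt ⇑φ (fderiv ℝ ⇑φ (c • x)) (c • x) :=
      (φ.differentiable (c • x)).hasFDerivAt
    have hcomp : HasFDerivAt (fun y : E3 => φ (c • y))
        ((fderiv ℝ ⇑φ (c • x)).comp (c • ContinuousLinearMap.id ℝ E3)) x := hφd.comp x hL
    have hs : HasFDerivAt (fun y : E3 => a * φ (c • y))
        (a • ((fderiv ℝ ⇑φ (c • x)).comp (c • ContinuousLinearMap.id ℝ E3))) x := by
      have := hcomp.const_smul a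
      exact this
    have hcoe : ⇑χ = fun y : E3 => a * φ (c • y) := funext hχ
    have hD : fderiv ℝ ⇑χ x
        = a • ((fderiv ℝ ⇑φ (c • x)).comp (c • ContinuousLinearMap.id ℝ E3)) := by
      rw [hcoe]; exact hs.fderiv
    have hsimp : (fderiv ℝ ⇑φ (c • x)).comp (c • ContinuousLinearMap.id ℝ E3)
        = c • fderiv ℝ ⇑φ (c • x) := by
      ext v
      simp [_root_.map_smul]
    rw [norm_gradient_eq, norm_gradient_eq, hD, hsimp, smul_smul, norm_smul,
      Real.norm_eq_abs, mul_pow, sq_abs]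
  refine ⟨χ, ?_, ?_, ?_⟩
  · have h1 : ∀ x : E3, (χ x) ^ 2 = a ^ 2 * ((fun y : E3 => (φ y) ^ 2) (c • x)) := by
      intro x; rw [hχ x]; ring
    calc m2I χ = ∫ x : E3, a ^ 2 * ((fun y : E3 => (φ y) ^ 2) (c • x)) := by
          rw [m2I]; exact integral_congr_ae (Filter.Eventually.of_forall h1)
      _ = a ^ 2 * ∫ x : E3, (fun y : E3 => (φ y) ^ 2) (c • x) := integral_const_mul _ _
      _ = a ^ 2 * ((c ^ 3)⁻¹ * ∫ y : E3, (φ y) ^ 2) :=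
          congrArg (fun t => a ^ 2 * t) (integral_comp_smul' (fun y : E3 => (φ y) ^ 2) c hc)
      _ = a ^ 2 * (c ^ 3)⁻¹ * m2I φ := by rw [m2I]; ring
  · have h1 : ∀ x : E3, ‖gradient ⇑χ x‖ ^ 2
        = (a * c) ^ 2 * ((fun y : E3 => ‖gradient ⇑φ y‖ ^ 2) (c • x)) := fun x => hgrad x
    calc dI χ = ∫ x : E3, (a * c) ^ 2 * ((fun y : E3 => ‖gradient ⇑φ y‖ ^ 2) (c • x)) := by
          rw [dI]; exact integral_congr_ae (Filter.Eventually.of_forall h1)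
      _ = (a * c) ^ 2 * ∫ x : E3, (fun y : E3 => ‖gradient ⇑φ y‖ ^ 2) (c • x) :=
          integral_const_mul _ _
      _ = (a * c) ^ 2 * ((c ^ 3)⁻¹ * ∫ y : E3, ‖gradient ⇑φ y‖ ^ 2) :=
          congrArg (fun t => (a * c) ^ 2 * t)
            (integral_comp_smul' (fun y : E3 => ‖gradient ⇑φ y‖ ^ 2) c hc)
      _ = a ^ 2 * c ^ 2 * (c ^ 3)⁻¹ * dI φ := by rw [dI]; ring
  · have h1 : ∀ x : E3, (χ x) ^ 4 = a ^ 4 * ((fun y : E3 => (φ y) ^ 4) (c • x)) := by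
      intro x; rw [hχ x]; ring
    calc pI χ = ∫ x : E3, a ^ 4 * ((fun y : E3 => (φ y) ^ 4) (c • x)) := by
          rw [pI]; exact integral_congr_ae (Filter.Eventually.of_forall h1)
      _ = a ^ 4 * ∫ x : E3, (fun y : E3 => (φ y) ^ 4) (c • x) := integral_const_mul _ _
      _ = a ^ 4 * ((c ^ 3)⁻¹ * ∫ y : E3, (φ y) ^ 4) :=
          congrArg (fun t => a ^ 4 * t) (integral_comp_smul' (fun y : E3 => (φ y) ^ 4) c hc)
      _ = a ^ 4 * (c ^ 3)⁻¹ * pI φ := by rw [pI]; ring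

lemma ne_zero_of_pI_pos (χ : 𝓢(E3, ℝ)) (h : 0 < pI χ) : χ ≠ 0 := by
  intro h0
  rw [h0] at h
  have : pI (0 : 𝓢(E3, ℝ)) = 0 := by
    rw [pI]
    simp
  rw [this] at h
  exact lt_irrefl _ h

lemma ne_zero_of_m2I_pos (χ : 𝓢(E3, ℝ)) (h : 0 < m2I χ) : χ ≠ 0 := by
  intro h0
  rw [h0] at h
  have : m2I (0 : 𝓢(E3, ℝ)) = 0 := by
    rw [m2I]
    simp
  rw [this] at h
  exact lt_irrefl _ h

end SDAux3

namespace SDAux4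
open SDAux SDAux2 SDAux3

variable (φ : 𝓢(E3, ℝ))

lemma m2I_eq_zero_of_coe (h : ⇑φ = 0) : m2I φ = 0 := by
  rw [m2I]; simp [h]

lemma dI_eq_zero_of_coe (h : ⇑φ = 0) : dI φ = 0 := by
  rw [dI]
  simp only [h]
  have hg : ∀ x : E3, gradient (0 : E3 → ℝ) x = 0 := by
    intro x
    rw [gradient, show (0 : E3 → ℝ) = fun _ : E3 => (0 : ℝ) from rfl, fderiv_fun_const]
    simp
  simp [hg]

lemma pI_eq_zero_of_coe (h : ⇑φ = 0) : pI φ = 0 := by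
  rw [pI]; simp [h]

end SDAux4

set_option maxHeartbeats 2000000 in
theorem sign_dichotomy    (m_Q : ℝ) (hmQ_pos : 0 < m_Q)
    (hmQ_K0 : ∀ ψ : 𝓢(E3, ℝ), ψ ≠ 0 → K0fun ⇑ψ = 0 → m_Q ≤ Jfun ⇑ψ)
    (hmQ_K2 : ∀ ψ : 𝓢(E3, ℝ), ψ ≠ 0 → K2fun ⇑ψ = 0 → m_Q ≤ Jfun ⇑ψ) :
    ∃ δ : ℝ, 0 < δ ∧ ∀ E₀ : ℝ, E₀ < m_Q → ∀ φ : 𝓢(E3, ℝ), Jfun ⇑φ ≤ E₀ →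
      (Xor'
        (K0fun ⇑φ ≤ - (2 * (m_Q - E₀)) ∧ K2fun ⇑φ ≤ - (2 * (m_Q - E₀)))
        (min (2 * (m_Q - E₀)) (δ * ∫ x : E3, ((φ x) ^ 2 + ‖gradient ⇑φ x‖ ^ 2)) ≤ K0fun ⇑φ ∧
         min (2 * (m_Q - E₀)) (δ * ∫ x : E3, ‖gradient ⇑φ x‖ ^ 2) ≤ K2fun ⇑φ)) ∧
      (K0fun ⇑φ < 0 ↔ K2fun ⇑φ < 0) := by
  classical
  refine ⟨1/4, by norm_num, ?_⟩
  intro E₀ hE₀ φ hφE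
  have hJ := SDAux2.J_eq φ
  have hK0 := SDAux2.K0_eq φ
  have hK2 := SDAux2.K2_eq φ
  have hm2n : 0 ≤ SDAux.m2I φ := SDAux2.m2I_nonneg φ
  have hdn : 0 ≤ SDAux.dI φ := SDAux2.dI_nonneg φ
  have hpn : 0 ≤ SDAux.pI φ := SDAux2.pI_nonneg φ
  have hsum : ∫ x : E3, ((φ x) ^ 2 + ‖gradient ⇑φ x‖ ^ 2) = SDAux.m2I φ + SDAux.dI φ :=
    SDAux2.sum_eq φ
  have hd_int : (∫ x : E3, ‖gradient ⇑φ x‖ ^ 2) = SDAux.dI φ := rfl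
  set m2 := SDAux.m2I φ with hm2def
  set d := SDAux.dI φ with hddef
  set p := SDAux.pI φ with hpdef
  clear_value m2 d p
  have hJlt : Jfun ⇑φ < m_Q := lt_of_le_of_lt hφE hE₀
  have hJlt' : (m2 + d) / 2 - p / 4 < m_Q := by rw [hJ] at hJlt; exact hJlt
  have hJE : (m2 + d) / 2 - p / 4 ≤ E₀ := by rw [hJ] at hφE; exact hφE
  have hε : 0 < m_Q - E₀ := by linarith
  -- if one of the integrals vanishes then all vanish
  have hzm2 : m2 = 0 → m2 = 0 ∧ d = 0 ∧ p = 0 := by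
    intro h
    have hc := SDAux2.coe_eq_zero_of_m2I φ (by rw [← hm2def]; exact h)
    exact ⟨h, by rw [hddef]; exact SDAux4.dI_eq_zero_of_coe φ hc,
      by rw [hpdef]; exact SDAux4.pI_eq_zero_of_coe φ hc⟩
  have hzd : d = 0 → m2 = 0 ∧ d = 0 ∧ p = 0 := by
    intro h
    have hc := SDAux2.coe_eq_zero_of_dI φ (by rw [← hddef]; exact h)
    exact ⟨by rw [hm2def]; exact SDAux4.m2I_eq_zero_of_coe φ hc, h,
      by rw [hpdef]; exact SDAux4.pI_eq_zero_of_coe φ hc⟩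
  -- generic consequence of the variational hypothesis for K0
  have key0 : ∀ s c : ℝ, 0 < s → 0 < c → ∀ A B P : ℝ,
      A = s * (c ^ 3)⁻¹ * m2 → B = s * c ^ 2 * (c ^ 3)⁻¹ * d → P = s ^ 2 * (c ^ 3)⁻¹ * p →
      (0 < P ∨ 0 < A) → A + B - P = 0 → m_Q ≤ (A + B) / 2 - P / 4 := by
    intro s c hs hc A B P hA hB hP hpos hz
    obtain ⟨χ, hm, hd, hp⟩ := SDAux3.exists_scaled φ (Real.sqrt s) c hc
    have ha2 : Real.sqrt s ^ 2 = s := Real.sq_sqrt hs.le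
    have ha4 : Real.sqrt s ^ 4 = s ^ 2 := by
      rw [show (4 : ℕ) = 2 * 2 from rfl, pow_mul, ha2]
    rw [ha2] at hm hd
    rw [ha4] at hp
    rw [← hm2def] at hm
    rw [← hddef] at hd
    rw [← hpdef] at hp
    rw [← hA] at hm
    rw [← hB] at hd
    rw [← hP] at hp
    have hχne : χ ≠ 0 := by
      rcases hpos with h | h
      · exact SDAux3.ne_zero_of_pI_pos χ (by rw [hp]; exact h)
      · exact SDAux3.ne_zero_of_m2I_pos χ (by rw [hm]; exact h)
    have hKχ : K0fun ⇑χ = 0 := by rw [SDAux2.K0_eq χ, hm, hd, hp]; linarith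
    have hq := hmQ_K0 χ hχne hKχ
    rw [SDAux2.J_eq χ, hm, hd, hp] at hq
    linarith
  have key2 : ∀ s c : ℝ, 0 < s → 0 < c → ∀ A B P : ℝ,
      A = s * (c ^ 3)⁻¹ * m2 → B = s * c ^ 2 * (c ^ 3)⁻¹ * d → P = s ^ 2 * (c ^ 3)⁻¹ * p →
      (0 < P ∨ 0 < A) → B - 3 / 4 * P = 0 → m_Q ≤ (A + B) / 2 - P / 4 := by
    intro s c hs hc A B P hA hB hP hpos hz
    obtain ⟨χ, hm, hd, hp⟩ := SDAux3.exists_scaled φ (Real.sqrt s) c hc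
    have ha2 : Real.sqrt s ^ 2 = s := Real.sq_sqrt hs.le
    have ha4 : Real.sqrt s ^ 4 = s ^ 2 := by
      rw [show (4 : ℕ) = 2 * 2 from rfl, pow_mul, ha2]
    rw [ha2] at hm hd
    rw [ha4] at hp
    rw [← hm2def] at hm
    rw [← hddef] at hd
    rw [← hpdef] at hp
    rw [← hA] at hm
    rw [← hB] at hd
    rw [← hP] at hp
    have hχne : χ ≠ 0 := by
      rcases hpos with h | h
      · exact SDAux3.ne_zero_of_pI_pos χ (by rw [hp]; exact h)
      · exact SDAux3.ne_zero_of_m2I_pos χ (by rw [hm]; exact h)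
    have hKχ : K2fun ⇑χ = 0 := by rw [SDAux2.K2_eq χ, hd, hp]; linarith
    have hq := hmQ_K2 χ hχne hKχ
    rw [SDAux2.J_eq χ, hm, hd, hp] at hq
    linarith
  -- multiplicative scaling versions (c = 1)
  have mkey0 : ∀ s : ℝ, 0 < s → (0 < s ^ 2 * p ∨ 0 < s * m2) →
      s * m2 + s * d - s ^ 2 * p = 0 → m_Q ≤ (s * m2 + s * d) / 2 - s ^ 2 * p / 4 := by
    intro s hs hpos hz
    exact key0 s 1 hs one_pos (s * m2) (s * d) (s ^ 2 * p) (by norm_num) (by norm_num)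
      (by norm_num) hpos hz
  have mkey2 : ∀ s : ℝ, 0 < s → (0 < s ^ 2 * p ∨ 0 < s * m2) →
      s * d - 3 / 4 * (s ^ 2 * p) = 0 → m_Q ≤ (s * m2 + s * d) / 2 - s ^ 2 * p / 4 := by
    intro s hs hpos hz
    exact key2 s 1 hs one_pos (s * m2) (s * d) (s ^ 2 * p) (by norm_num) (by norm_num)
      (by norm_num) hpos hz
  -- dilation versions (s = c ^ 3)
  have dkey0 : ∀ c : ℝ, 0 < c → (0 < c ^ 3 * p ∨ 0 < m2) →
      m2 + c ^ 2 * d - c ^ 3 * p = 0 → m_Q ≤ (m2 + c ^ 2 * d) / 2 - c ^ 3 * p / 4 := by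
    intro c hc hpos hz
    have hc3 : (0 : ℝ) < c ^ 3 := by positivity
    exact key0 (c ^ 3) c hc3 hc m2 (c ^ 2 * d) (c ^ 3 * p)
      (by field_simp) (by field_simp; try ring) (by field_simp; try ring) hpos hz
  have dkey2 : ∀ c : ℝ, 0 < c → (0 < c ^ 3 * p ∨ 0 < m2) →
      c ^ 2 * d - 3 / 4 * (c ^ 3 * p) = 0 → m_Q ≤ (m2 + c ^ 2 * d) / 2 - c ^ 3 * p / 4 := by
    intro c hc hpos hz
    have hc3 : (0 : ℝ) < c ^ 3 := by positivity
    exact key2 (c ^ 3) c hc3 hc m2 (c ^ 2 * d) (c ^ 3 * p)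
      (by field_simp) (by field_simp; try ring) (by field_simp; try ring) hpos hz
  -- (N0) if K0 < 0 then m_Q ≤ (m2+d)/4
  have hN0 : K0fun ⇑φ < 0 → m_Q ≤ (m2 + d) / 4 := by
    intro h
    rw [hK0] at h
    have hmpos : 0 < m2 + d := by
      rcases eq_or_lt_of_le (by positivity : (0 : ℝ) ≤ m2 + d) with he | hl
      · exfalso
        obtain ⟨h1, h2, h3⟩ := hzm2 (by linarith)
        rw [h1, h2, h3] at h
        norm_num at h
      · exact hl
    have hppos : 0 < p := by linarith
    have hpne : p ≠ 0 := hppos.ne'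
    set s := (m2 + d) / p with hsdef
    have hs : 0 < s := by positivity
    have hq := mkey0 s hs (Or.inl (by positivity)) (by rw [hsdef]; field_simp; ring)
    have he : (s * m2 + s * d) / 2 - s ^ 2 * p / 4 = (m2 + d) ^ 2 / (4 * p) := by
      rw [hsdef]; field_simp; ring
    rw [he] at hq
    have hle : (m2 + d) ^ 2 / (4 * p) ≤ (m2 + d) / 4 := by
      rw [div_le_div_iff₀ (by positivity) (by norm_num)]
      linarith [mul_lt_mul_of_pos_left (show m2 + d < p by linarith) hmpos]
    linarith
  -- (N2) if K2 < 0 then m_Q ≤ m2/2 + d/6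
  have hN2 : K2fun ⇑φ < 0 → m_Q ≤ m2 / 2 + d / 6 := by
    intro h
    rw [hK2] at h
    have hdpos : 0 < d := by
      rcases eq_or_lt_of_le hdn with he | hl
      · exfalso
        obtain ⟨h1, h2, h3⟩ := hzd he.symm
        rw [h2, h3] at h
        norm_num at h
      · exact hl
    have hppos : 0 < p := by linarith
    have hpne : p ≠ 0 := hppos.ne'
    set c := 4 * d / (3 * p) with hcdef
    have hc : 0 < c := by positivity
    have h34 : 3 * (c * p) = 4 * d := by rw [hcdef]; field_simp
    have hcl : c < 1 := by
      rw [hcdef, div_lt_one (by positivity)]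
      linarith
    clear_value c
    have hq := dkey2 c hc (Or.inl (by positivity))
      (by linear_combination (-(c ^ 2) / 4) * h34)
    have hc3p : c ^ 3 * p = 4 / 3 * (c ^ 2 * d) := by
      linear_combination (c ^ 2 / 3) * h34
    rw [hc3p] at hq
    have hc2 : c ^ 2 ≤ 1 := pow_le_one₀ hc.le hcl.le
    have hc2d : c ^ 2 * d ≤ 1 * d := mul_le_mul_of_nonneg_right hc2 hdpos.le
    linarith
  -- (P0)
  have hP0 : 0 ≤ K0fun ⇑φ → min (2 * (m_Q - E₀)) (1 / 4 * (m2 + d)) ≤ K0fun ⇑φ := by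
    intro h0
    by_contra hcon
    have hcon' := not_le.mp hcon
    rw [lt_min_iff] at hcon'
    obtain ⟨hc1, hc2⟩ := hcon'
    rw [hK0] at h0 hc1 hc2
    have hmpos : 0 < m2 + d := by linarith
    have hppos : 0 < p := by linarith
    have hpne : p ≠ 0 := hppos.ne'
    set s := (m2 + d) / p with hsdef
    have hs : 0 < s := by positivity
    have hq := mkey0 s hs (Or.inl (by positivity)) (by rw [hsdef]; field_simp; ring)
    have he : (s * m2 + s * d) / 2 - s ^ 2 * p / 4 = (m2 + d) ^ 2 / (4 * p) := by
      rw [hsdef]; field_simp; ring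
    rw [he] at hq
    have hq' : m_Q * (4 * p) ≤ (m2 + d) ^ 2 := (le_div_iff₀ (by positivity)).mp hq
    have hstep1 : m_Q * (4 * p) - E₀ * (4 * p) ≤ (m2 + d - p) ^ 2 := by
      linarith [hq', mul_le_mul_of_nonneg_left hJE (by positivity : (0 : ℝ) ≤ 4 * p)]
    have hstep2 : (m2 + d - p) ^ 2 ≤ (m2 + d - p) * (2 * (m_Q - E₀)) := by
      linarith [mul_le_mul_of_nonneg_left hc1.le h0]
    have hKp : m2 + d - p < p / 3 := by linarith
    have hstep3 := mul_lt_mul_of_pos_left hKp (by linarith : (0 : ℝ) < 2 * (m_Q - E₀))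
    linarith [hstep1, hstep2, hstep3, mul_pos hε hppos]
  -- (P2)
  have hP2 : 0 ≤ K2fun ⇑φ → min (2 * (m_Q - E₀)) (1 / 4 * d) ≤ K2fun ⇑φ := by
    intro h0
    by_contra hcon
    have hcon' := not_le.mp hcon
    rw [lt_min_iff] at hcon'
    obtain ⟨hc1, hc2⟩ := hcon'
    rw [hK2] at h0 hc1 hc2
    have hdpos : 0 < d := by linarith
    have hppos : 0 < p := by linarith
    have hpne : p ≠ 0 := hppos.ne'
    set c := 4 * d / (3 * p) with hcdef
    have hc : 0 < c := by positivity
    have h34 : 3 * (c * p) = 4 * d := by rw [hcdef]; field_simp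
    have hcge1 : 1 ≤ c := by
      rw [hcdef, le_div_iff₀ (by positivity)]
      linarith
    have hclt : c < 4 / 3 := by
      rw [hcdef, div_lt_iff₀ (by positivity)]
      nlinarith
    clear_value c
    have hq := dkey2 c hc (Or.inl (by positivity))
      (by linear_combination (-(c ^ 2) / 4) * h34)
    have hc3p : c ^ 3 * p = 4 / 3 * (c ^ 2 * d) := by
      linear_combination (c ^ 2 / 3) * h34
    rw [hc3p] at hq
    -- hq : m_Q ≤ (m2 + c^2*d)/2 - (4/3*(c^2*d))/4 = m2/2 + c^2*d/6
    set K := d - 3 / 4 * p with hKdef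
    clear_value K
    have hKnn : 0 ≤ K := h0
    have hc1' : (c - 1) * (3 * p) = 4 * K := by rw [hKdef]; linear_combination h34
    have hdp : d < p := by linarith
    have ha : m_Q - E₀ ≤ (c ^ 2 - 1) * d / 6 - K / 3 := by
      rw [hKdef]; linarith
    have ha' : (m_Q - E₀) * (3 * p) ≤ ((c ^ 2 - 1) * d / 6 - K / 3) * (3 * p) :=
      mul_le_mul_of_nonneg_right ha (by positivity)
    have hsub : (c ^ 2 - 1) * (3 * p) = 4 * K * (c + 1) := by
      linear_combination (c + 1) * hc1'
    have he2 : ((c ^ 2 - 1) * d / 6 - K / 3) * (3 * p) = 2 / 3 * (K * (c + 1) * d) - K * p := by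
      linear_combination (d / 6) * hsub
    rw [he2] at ha'
    linarith [mul_nonneg (mul_nonneg hKnn (by linarith : (0 : ℝ) ≤ 4 / 3 - c)) hdn,
      mul_nonneg hKnn (by linarith : (0 : ℝ) ≤ p - d),
      mul_pos hε hppos,
      mul_lt_mul_of_pos_right hc1 hppos]
  -- (E5a) impossible: 0 ≤ K0 and K2 < 0
  have hE5a : 0 ≤ K0fun ⇑φ → K2fun ⇑φ < 0 → False := by
    intro h0 h2
    rw [hK0] at h0
    rw [hK2] at h2
    have hdpos : 0 < d := by
      rcases eq_or_lt_of_le hdn with he | hl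
      · exfalso
        obtain ⟨h1', h2', h3'⟩ := hzd he.symm
        rw [h2', h3'] at h2
        norm_num at h2
      · exact hl
    have hppos : 0 < p := by linarith
    have hpne : p ≠ 0 := hppos.ne'
    set s := 4 * d / (3 * p) with hsdef
    have hs : 0 < s := by positivity
    have h34 : 3 * (s * p) = 4 * d := by rw [hsdef]; field_simp
    have hsl : s < 1 := by
      rw [hsdef, div_lt_one (by positivity)]
      linarith
    clear_value s
    have hq := mkey2 s hs (Or.inl (by positivity))
      (by linear_combination (-s / 4) * h34)
    -- J(φ) ≥ the scaled energy
    linarith [hq, hJlt', mul_nonneg hpn (sq_nonneg (1 - s)),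
      mul_nonneg (by linarith : (0 : ℝ) ≤ 1 - s) h0]
  -- (E5b) impossible: 0 ≤ K2 and K0 < 0
  have hE5b : 0 ≤ K2fun ⇑φ → K0fun ⇑φ < 0 → False := by
    intro h2 h0
    rw [hK0] at h0
    rw [hK2] at h2
    have hm2pos : 0 < m2 := by
      rcases eq_or_lt_of_le hm2n with he | hl
      · exfalso
        obtain ⟨h1', h2', h3'⟩ := hzm2 he.symm
        rw [h1', h2', h3'] at h0
        norm_num at h0
      · exact hl
    have hppos : 0 < p := by linarith
    -- intermediate value theorem for g c = m2 + c^2 d - c^3 p on [0,1]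
    have hgc : Continuous fun c : ℝ => m2 + c ^ 2 * d - c ^ 3 * p :=
      (continuous_const.add ((continuous_pow 2).mul continuous_const)).sub
        ((continuous_pow 3).mul continuous_const)
    have hmem : (0 : ℝ) ∈ Set.Ioo (m2 + (1 : ℝ) ^ 2 * d - (1 : ℝ) ^ 3 * p)
        (m2 + (0 : ℝ) ^ 2 * d - (0 : ℝ) ^ 3 * p) := by
      constructor
      · norm_num; linarith
      · norm_num; linarith
    have hsub := intermediate_value_Ioo' (by norm_num : (0 : ℝ) ≤ 1)
      hgc.continuousOn
    obtain ⟨c₀, hc₀mem, hgc₀⟩ := hsub hmem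
    obtain ⟨hc₀0, hc₀1⟩ := hc₀mem
    have hq := dkey0 c₀ hc₀0 (Or.inr hm2pos) (by simpa using hgc₀)
    have hc2le : c₀ ^ 2 ≤ 1 := pow_le_one₀ hc₀0.le hc₀1.le
    linarith [hq, hJlt', mul_nonneg hpn
        (by positivity : (0 : ℝ) ≤ (1 - c₀) ^ 2 * (1 + 2 * c₀)),
      mul_nonneg (by linarith : (0 : ℝ) ≤ d - 3 / 4 * p)
        (by linarith : (0 : ℝ) ≤ 1 - c₀ ^ 2)]
  -- assemble
  rcases lt_or_ge (K0fun ⇑φ) 0 with hneg | hpos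
  · have hK2neg : K2fun ⇑φ < 0 := by
      by_contra hge
      exact hE5b (not_lt.mp hge) hneg
    have hb1 : K0fun ⇑φ ≤ -(2 * (m_Q - E₀)) := by
      have := hN0 hneg
      rw [hK0]
      linarith
    have hb2 : K2fun ⇑φ ≤ -(2 * (m_Q - E₀)) := by
      have := hN2 hK2neg
      rw [hK2]
      linarith
    refine ⟨Or.inl ⟨⟨hb1, hb2⟩, ?_⟩, iff_of_true hneg hK2neg⟩
    rintro ⟨hB1, -⟩
    rw [hsum] at hB1
    have hminnn : 0 ≤ min (2 * (m_Q - E₀)) (1 / 4 * (m2 + d)) :=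
      le_min (by linarith) (by positivity)
    linarith [le_trans hminnn hB1]
  · have hK2pos : 0 ≤ K2fun ⇑φ := by
      by_contra hlt
      exact hE5a hpos (not_le.mp hlt)
    refine ⟨Or.inr ⟨⟨?_, ?_⟩, ?_⟩, iff_of_false (not_lt.mpr hpos) (not_lt.mpr hK2pos)⟩
    · rw [hsum]
      exact hP0 hpos
    · rw [hd_int]
      exact hP2 hK2pos
    · rintro ⟨hA1, -⟩
      linarith

end
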